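/- In the Kleisli category Set_Δ̄ of the countably supported distribution monad (objects: sets; morphisms X → Y: functions X → Δ̄(Y)), the midpoint operation on hom-sets given pointwise by m(f,g)(x) = (f(x)+g(x))/2 defines a coinflip structure: each hom-set is a midpoint algebra and both precomposition and postcomposition (Kleisli composition) are midpoint homomorphisms. Moreover this coinflip structure is externally iterable. -/

import Mathlib

open scoped ENNReal

/-- The midpoint `(μ+ν)/2` of two countably supported distributions. -/
noncomputable def pmfMid {X : Type} (μ ν : PMF X) : PMF X :=
  ⟨fun x => (μ x + ν x) / 2, by
    have h : ∑' x, (μ x + ν x) / 2 = 1 := by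
      simp only [div_eq_mul_inv]
      rw [ENNReal.tsum_mul_right, ENNReal.tsum_add, μ.tsum_coe, ν.tsum_coe,
        one_add_one_eq_two]
      exact ENNReal.mul_inv_cancel (by norm_num) (by norm_num)
    exact h ▸ ENNReal.summable.hasSum⟩

/-- Kleisli composition for the countably supported distribution monad. -/
noncomputable def kcomp {X Y Z : Type} (f : X → PMF Y) (g : Y → PMF Z) :
    X → PMF Z := fun x => (f x).bind g

/-- The pointwise midpoint of two Kleisli morphisms. -/
noncomputable def hmid {X Y : Type} (f g : X → PMF Y) : X → PMF Y :=
  fun x => pmfMid (f x) (g x)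

lemma pmfMid_apply {X : Type} (μ ν : PMF X) (x : X) :
    pmfMid μ ν x = (μ x + ν x) / 2 := rfl

lemma hmid_apply {X Y : Type} (f g : X → PMF Y) (x : X) (y : Y) :
    hmid f g x y = (f x y + g x y) / 2 := rfl

lemma tsum_half_pow : ∑' n : ℕ, (2:ℝ≥0∞)⁻¹ ^ (n+1) = 1 := by
  simp only [pow_succ]
  rw [ENNReal.tsum_mul_right, ENNReal.tsum_geometric]
  rw [show (1:ℝ≥0∞) - 2⁻¹ = 2⁻¹ from
    ENNReal.sub_eq_of_eq_add (by norm_num) ENNReal.inv_two_add_inv_two.symm]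
  rw [inv_inv]
  exact ENNReal.mul_inv_cancel (by norm_num) (by norm_num)

lemma ennreal_add_self_div_two (a : ℝ≥0∞) : (a + a) / 2 = a := by
  rw [← two_mul, mul_comm, mul_div_assoc]
  simp [ENNReal.div_self]

/-- Iterated first-projection trajectory. -/
def traj {Z : Type} (σ : Z → Z) : ℕ → Z → Z
  | 0, z => z
  | n+1, z => traj σ n (σ z)

/-- The canonical solution of the iteration equation. -/
noncomputable def iterSol {X Y Z : Type} (s : Z → Z × (X → PMF Y)) (z : Z) (x : X) :
    PMF Y :=
  ⟨fun y => ∑' n : ℕ, (s (traj (fun w => (s w).1) n z)).2 x y * (2:ℝ≥0∞)⁻¹ ^ (n+1), by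
    have h : ∑' y, ∑' n : ℕ,
        (s (traj (fun w => (s w).1) n z)).2 x y * (2:ℝ≥0∞)⁻¹ ^ (n+1) = 1 := by
      rw [ENNReal.tsum_comm]
      have : ∀ n : ℕ, ∑' y, (s (traj (fun w => (s w).1) n z)).2 x y * (2:ℝ≥0∞)⁻¹ ^ (n+1)
          = (2:ℝ≥0∞)⁻¹ ^ (n+1) := fun n => by
        rw [ENNReal.tsum_mul_right, PMF.tsum_coe, one_mul]
      rw [tsum_congr this, tsum_half_pow]
    exact h ▸ ENNReal.summable.hasSum⟩

lemma iterSol_apply {X Y Z : Type} (s : Z → Z × (X → PMF Y)) (z : Z) (x : X) (y : Y) :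
    iterSol s z x y
      = ∑' n : ℕ, (s (traj (fun w => (s w).1) n z)).2 x y * (2:ℝ≥0∞)⁻¹ ^ (n+1) := rfl

lemma iterSol_fixed {X Y Z : Type} (s : Z → Z × (X → PMF Y)) (z : Z) :
    iterSol s z = hmid (iterSol s (s z).1) (s z).2 := by
  funext x
  ext y
  set σ : Z → Z := fun w => (s w).1 with hσ
  set a : ℕ → Z → ℝ≥0∞ := fun n w => (s (traj σ n w)).2 x y with ha
  have key : iterSol s z x y = ∑' n : ℕ, a n z * (2:ℝ≥0∞)⁻¹ ^ (n+1) := rfl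
  rw [key, tsum_eq_zero_add' ENNReal.summable]
  have hshift : ∀ n : ℕ, a (n+1) z = a n (σ z) := fun n => rfl
  have h2 : ∑' n : ℕ, a (n+1) z * (2:ℝ≥0∞)⁻¹ ^ (n+1+1)
      = (∑' n : ℕ, a n (σ z) * (2:ℝ≥0∞)⁻¹ ^ (n+1)) * 2⁻¹ := by
    rw [← ENNReal.tsum_mul_right]
    exact tsum_congr fun n => by rw [hshift, pow_succ, mul_assoc]
  rw [h2, hmid_apply]
  have hr : (iterSol s (s z).1 x) y = ∑' n : ℕ, a n (σ z) * (2:ℝ≥0∞)⁻¹ ^ (n+1) := rfl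
  have h0 : a 0 z = (s z).2 x y := rfl
  rw [show ((iterSol s (s z).1) x y + (s z).2 x y) / 2
      = (iterSol s (s z).1 x y) * 2⁻¹ + (s z).2 x y * 2⁻¹ by
    rw [ENNReal.add_div, div_eq_mul_inv, div_eq_mul_inv], hr, h0]
  rw [pow_one, add_comm]

/-- In the Kleisli category of the countably supported distribution monad, the
pointwise midpoint operation on hom-sets is a coinflip structure (each hom-set is
a midpoint algebra and Kleisli pre- and postcomposition are midpoint
homomorphisms), and this coinflip structure is externally iterable. -/
theorem kleisli_pmf_coinflip_structure :
    (∀ (X Y : Type) (f : X → PMF Y), hmid f f = f) ∧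
    (∀ (X Y : Type) (f g : X → PMF Y), hmid f g = hmid g f) ∧
    (∀ (X Y : Type) (f g h k : X → PMF Y),
      hmid (hmid f g) (hmid h k) = hmid (hmid f h) (hmid g k)) ∧
    (∀ (W X Y : Type) (h : W → PMF X) (f g : X → PMF Y),
      kcomp h (hmid f g) = hmid (kcomp h f) (kcomp h g)) ∧
    (∀ (X Y Z : Type) (f g : X → PMF Y) (k : Y → PMF Z),
      kcomp (hmid f g) k = hmid (kcomp f k) (kcomp g k)) ∧
    (∀ (X Y : Type) (Z : Type) (s : Z → Z × (X → PMF Y)),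
      ∃! u : Z → (X → PMF Y), ∀ z, u z = hmid (u (s z).1) (s z).2) := by
  refine ⟨?_, ?_, ?_, ?_, ?_, ?_⟩
  · intro X Y f
    funext x; ext y
    rw [hmid_apply, ennreal_add_self_div_two]
  · intro X Y f g
    funext x; ext y
    rw [hmid_apply, hmid_apply, add_comm]
  · intro X Y f g h k
    funext x; ext y
    simp only [hmid_apply, ENNReal.div_add_div_same]
    rw [show f x y + g x y + (h x y + k x y) = f x y + h x y + (g x y + k x y) by ring]
  · intro W X Y h f g
    funext w; ext y
    simp only [kcomp, hmid_apply, PMF.bind_apply, hmid, pmfMid_apply, div_eq_mul_inv]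
    calc ∑' a, h w a * ((f a y + g a y) * 2⁻¹)
        = ∑' a, (h w a * f a y + h w a * g a y) * 2⁻¹ := tsum_congr fun a => by ring
      _ = (∑' a, h w a * f a y + ∑' a, h w a * g a y) * 2⁻¹ := by
          rw [ENNReal.tsum_mul_right, ENNReal.tsum_add]
  · intro X Y Z f g k
    funext x; ext y
    simp only [kcomp, hmid_apply, PMF.bind_apply, hmid, pmfMid_apply, div_eq_mul_inv]
    calc ∑' a, (f x a + g x a) * 2⁻¹ * k a y
        = ∑' a, (f x a * k a y + g x a * k a y) * 2⁻¹ := tsum_congr fun a => by ring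
      _ = (∑' a, f x a * k a y + ∑' a, g x a * k a y) * 2⁻¹ := by
          rw [ENNReal.tsum_mul_right, ENNReal.tsum_add]
  · intro X Y Z s
    refine ⟨iterSol s, fun z => iterSol_fixed s z, ?_⟩
    intro v hv
    -- uniqueness
    have approx : ∀ (u v : Z → X → PMF Y),
        (∀ z, u z = hmid (u (s z).1) (s z).2) →
        (∀ z, v z = hmid (v (s z).1) (s z).2) →
        ∀ (n : ℕ) (z : Z) (x : X) (y : Y),
          u z x y ≤ v z x y + (2:ℝ≥0∞)⁻¹ ^ n := by
      intro u v hu hv n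
      induction n with
      | zero =>
        intro z x y
        rw [pow_zero]
        exact le_add_left ((u z x).coe_le_one y)
      | succ n ih =>
        intro z x y
        have hu' : u z x y = (u (s z).1 x y + (s z).2 x y) / 2 := by
          rw [hu z]; rfl
        have hv' : v z x y = (v (s z).1 x y + (s z).2 x y) / 2 := by
          rw [hv z]; rfl
        rw [hu', hv']
        calc (u (s z).1 x y + (s z).2 x y) / 2
            ≤ (v (s z).1 x y + (2:ℝ≥0∞)⁻¹ ^ n + (s z).2 x y) / 2 :=
              ENNReal.div_le_div_right (add_le_add_left (ih (s z).1 x y) _) 2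
          _ = (v (s z).1 x y + (s z).2 x y) / 2 + (2:ℝ≥0∞)⁻¹ ^ (n+1) := by
              rw [add_right_comm, ENNReal.add_div, pow_succ]; simp only [div_eq_mul_inv]
    have le_of_approx : ∀ (u v : Z → X → PMF Y),
        (∀ (n : ℕ) (z : Z) (x : X) (y : Y), u z x y ≤ v z x y + (2:ℝ≥0∞)⁻¹ ^ n) →
        ∀ (z : Z) (x : X) (y : Y), u z x y ≤ v z x y := by
      intro u v h z x y
      refine ENNReal.le_of_forall_pos_le_add fun ε hε _ => ?_
      obtain ⟨n, hn⟩ := ENNReal.exists_inv_two_pow_lt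
        (by exact_mod_cast hε.ne' : (ε : ℝ≥0∞) ≠ 0)
      exact (h n z x y).trans (add_le_add_right hn.le _)
    have h1 := approx v (iterSol s) hv (fun z => iterSol_fixed s z)
    have h2 := approx (iterSol s) v (fun z => iterSol_fixed s z) hv
    funext z x
    ext y
    exact le_antisymm (le_of_approx _ _ h1 z x y) (le_of_approx _ _ h2 z x y)
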